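/- Let U ⊆ ℍ be open and let ρ : U → ℝ be a smooth positive function. Then for every point p ∈ U, the connection A⁺ with components A⁺_μ := −Im((∂(log ρ)/∂x̄)·ē_μ), where (ē₀,ē₁,ē₂,ē₃) = (1,−i,−j,−k), is anti-self-dual at p (i.e. its curvature satisfies F₀₁ = −F₂₃, F₀₂ = −F₃₁ and F₀₃ = −F₁₂ at p) if and only if (Δρ)(p) = 0. In particular, A⁺ is an anti-self-dual connection on all of U if and only if ρ is harmonic. -/

import Mathlib

open scoped Quaternion

noncomputable section

/-- The quaternion units (1, i, j, k) as coordinate directions in ℍ ≅ ℝ⁴. -/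
def qe : Fin 4 → ℍ[ℝ] := ![1, ⟨0,1,0,0⟩, ⟨0,0,1,0⟩, ⟨0,0,0,1⟩]

/-- The conjugate units (ē₀, ē₁, ē₂, ē₃) = (1, −i, −j, −k). -/
def qebar : Fin 4 → ℍ[ℝ] := ![1, -⟨0,1,0,0⟩, -⟨0,0,1,0⟩, -⟨0,0,0,1⟩]

/-- Partial derivative ∂_μ of a quaternion-valued function, in the direction `qe μ`. -/
def qpd (μ : Fin 4) (f : ℍ[ℝ] → ℍ[ℝ]) (x : ℍ[ℝ]) : ℍ[ℝ] := fderiv ℝ f x (qe μ)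

/-- Partial derivative ∂_μ of a real-valued function on ℍ. -/
def rpd (μ : Fin 4) (f : ℍ[ℝ] → ℝ) (x : ℍ[ℝ]) : ℝ := fderiv ℝ f x (qe μ)

/-- Flat Laplacian Δ = ∂₀² + ∂₁² + ∂₂² + ∂₃² on ℍ ≅ ℝ⁴. -/
def qlap (f : ℍ[ℝ] → ℝ) (x : ℍ[ℝ]) : ℝ := ∑ μ : Fin 4, rpd μ (rpd μ f) x

/-- Quaternionic Wirtinger-type derivative ∂f/∂x̄ = (1/2)(∂₀f + i·∂₁f + j·∂₂f + k·∂₃f). -/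
def qdxbar (f : ℍ[ℝ] → ℍ[ℝ]) (x : ℍ[ℝ]) : ℍ[ℝ] :=
  (2:ℝ)⁻¹ • (qpd 0 f x + qe 1 * qpd 1 f x + qe 2 * qpd 2 f x + qe 3 * qpd 3 f x)

/-- log ρ viewed as a quaternion-valued function. -/
def qlog (ρ : ℍ[ℝ] → ℝ) : ℍ[ℝ] → ℍ[ℝ] := fun x => ((Real.log (ρ x) : ℝ) : ℍ[ℝ])

/-- Components A⁺_μ = −Im((∂(log ρ)/∂x̄)·ē_μ) of the harmonic-function-ansatz connection A⁺. -/
def Aplus (ρ : ℍ[ℝ] → ℝ) (μ : Fin 4) (x : ℍ[ℝ]) : ℍ[ℝ] :=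
  - Quaternion.im (qdxbar (qlog ρ) x * qebar μ)

/-- Curvature components F_{μν} = ∂_μ A_ν − ∂_ν A_μ + A_μ A_ν − A_ν A_μ. -/
def curv (A : Fin 4 → ℍ[ℝ] → ℍ[ℝ]) (μ ν : Fin 4) (x : ℍ[ℝ]) : ℍ[ℝ] :=
  qpd μ (A ν) x - qpd ν (A μ) x + A μ x * A ν x - A ν x * A μ x

/-- Anti-self-duality of the curvature of the connection A at the point p:
F₀₁ = −F₂₃, F₀₂ = −F₃₁, F₀₃ = −F₁₂. -/
def AntiSelfDualAt (A : Fin 4 → ℍ[ℝ] → ℍ[ℝ]) (p : ℍ[ℝ]) : Prop :=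
  curv A 0 1 p = - curv A 2 3 p ∧ curv A 0 2 p = - curv A 3 1 p ∧
    curv A 0 3 p = - curv A 1 2 p

/-! ### Auxiliary definitions for the proof -/

/-- `log ρ` as a real-valued function. -/
private def lg (ρ : ℍ[ℝ] → ℝ) : ℍ[ℝ] → ℝ := fun y => Real.log (ρ y)

/-- The partial derivatives of `log ρ`. -/
private def lu (ρ : ℍ[ℝ] → ℝ) (ν : Fin 4) (x : ℍ[ℝ]) : ℝ := fderiv ℝ (lg ρ) x (qe ν)

@[simp] private lemma qe1_re : (qe 1).re = 0 := rfl
@[simp] private lemma qe1_imI : (qe 1).imI = 1 := rfl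
@[simp] private lemma qe1_imJ : (qe 1).imJ = 0 := rfl
@[simp] private lemma qe1_imK : (qe 1).imK = 0 := rfl
@[simp] private lemma qe2_re : (qe 2).re = 0 := rfl
@[simp] private lemma qe2_imI : (qe 2).imI = 0 := rfl
@[simp] private lemma qe2_imJ : (qe 2).imJ = 1 := rfl
@[simp] private lemma qe2_imK : (qe 2).imK = 0 := rfl
@[simp] private lemma qe3_re : (qe 3).re = 0 := rfl
@[simp] private lemma qe3_imI : (qe 3).imI = 0 := rfl
@[simp] private lemma qe3_imJ : (qe 3).imJ = 0 := rfl
@[simp] private lemma qe3_imK : (qe 3).imK = 1 := rfl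
@[simp] private lemma qebar0_re : (qebar 0).re = 1 := rfl
@[simp] private lemma qebar0_imI : (qebar 0).imI = 0 := rfl
@[simp] private lemma qebar0_imJ : (qebar 0).imJ = 0 := rfl
@[simp] private lemma qebar0_imK : (qebar 0).imK = 0 := rfl
@[simp] private lemma qebar1_re : (qebar 1).re = 0 := neg_zero
@[simp] private lemma qebar1_imI : (qebar 1).imI = -1 := rfl
@[simp] private lemma qebar1_imJ : (qebar 1).imJ = 0 := neg_zero
@[simp] private lemma qebar1_imK : (qebar 1).imK = 0 := neg_zero
@[simp] private lemma qebar2_re : (qebar 2).re = 0 := neg_zero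
@[simp] private lemma qebar2_imI : (qebar 2).imI = 0 := neg_zero
@[simp] private lemma qebar2_imJ : (qebar 2).imJ = -1 := rfl
@[simp] private lemma qebar2_imK : (qebar 2).imK = 0 := neg_zero
@[simp] private lemma qebar3_re : (qebar 3).re = 0 := neg_zero
@[simp] private lemma qebar3_imI : (qebar 3).imI = 0 := neg_zero
@[simp] private lemma qebar3_imJ : (qebar 3).imJ = 0 := neg_zero
@[simp] private lemma qebar3_imK : (qebar 3).imK = -1 := rfl

set_option maxHeartbeats 2000000 in
open Filter in
/-- The key computation: at every point of `U` the three "self-dual" curvature sums are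
`(2ρ)⁻¹ Δρ` times `i`, `j`, `k` respectively. -/
private theorem key_curv (U : Set ℍ[ℝ]) (hU : IsOpen U) (ρ : ℍ[ℝ] → ℝ)
    (hρ : ContDiffOn ℝ (⊤ : ℕ∞) ρ U) (hpos : ∀ x ∈ U, 0 < ρ x) {p : ℍ[ℝ]} (hp : p ∈ U) :
    curv (Aplus ρ) 0 1 p + curv (Aplus ρ) 2 3 p
      = ((2:ℝ)⁻¹ * (ρ p)⁻¹ * qlap ρ p) • qe 1 ∧
    curv (Aplus ρ) 0 2 p + curv (Aplus ρ) 3 1 p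
      = ((2:ℝ)⁻¹ * (ρ p)⁻¹ * qlap ρ p) • qe 2 ∧
    curv (Aplus ρ) 0 3 p + curv (Aplus ρ) 1 2 p
      = ((2:ℝ)⁻¹ * (ρ p)⁻¹ * qlap ρ p) • qe 3 := by
  -- basic smoothness facts
  have hcd : ∀ x ∈ U, ContDiffAt ℝ (⊤ : ℕ∞) ρ x := fun x hx => hρ.contDiffAt (hU.mem_nhds hx)
  have hne : ∀ x ∈ U, ρ x ≠ 0 := fun x hx => ne_of_gt (hpos x hx)
  have hρd : ∀ x ∈ U, DifferentiableAt ℝ ρ x := fun x hx => (hcd x hx).differentiableAt (by simp)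
  have hgd : ∀ x ∈ U, DifferentiableAt ℝ (lg ρ) x := fun x hx =>
    DifferentiableAt.log (hρd x hx) (hne x hx)
  have hUev : U ∈ nhds p := hU.mem_nhds hp
  -- Step 1: the quaternionic partial derivatives of `qlog ρ` are the (real) `lu`'s.
  have hcoe : ∀ x ∈ U, ∀ ν : Fin 4, qpd ν (qlog ρ) x = ((lu ρ ν x : ℝ) : ℍ[ℝ]) := by
    intro x hx ν
    have hfun : qlog ρ = (⇑(algebraMapCLM ℝ ℍ[ℝ])) ∘ (lg ρ) := by
      funext y; simp [qlog, lg, algebraMapCLM]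
    show fderiv ℝ (qlog ρ) x (qe ν) = _
    rw [hfun, fderiv_comp x (algebraMapCLM ℝ ℍ[ℝ]).differentiableAt (hgd x hx),
      ContinuousLinearMap.fderiv]
    simp [algebraMapCLM, lu]
  -- Step 2: explicit components of `Aplus` on `U`.
  have hrep : ∀ x ∈ U,
      Aplus ρ 0 x = (-(2⁻¹ * lu ρ 1 x)) • qe 1 + (-(2⁻¹ * lu ρ 2 x)) • qe 2
          + (-(2⁻¹ * lu ρ 3 x)) • qe 3 ∧
      Aplus ρ 1 x = (2⁻¹ * lu ρ 0 x) • qe 1 + (2⁻¹ * lu ρ 3 x) • qe 2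
          + (-(2⁻¹ * lu ρ 2 x)) • qe 3 ∧
      Aplus ρ 2 x = (-(2⁻¹ * lu ρ 3 x)) • qe 1 + (2⁻¹ * lu ρ 0 x) • qe 2
          + (2⁻¹ * lu ρ 1 x) • qe 3 ∧
      Aplus ρ 3 x = (2⁻¹ * lu ρ 2 x) • qe 1 + (-(2⁻¹ * lu ρ 1 x)) • qe 2
          + (2⁻¹ * lu ρ 0 x) • qe 3 := by
    intro x hx
    have hq : qdxbar (qlog ρ) x = (2:ℝ)⁻¹ • (((lu ρ 0 x : ℝ) : ℍ[ℝ])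
        + qe 1 * ((lu ρ 1 x : ℝ) : ℍ[ℝ]) + qe 2 * ((lu ρ 2 x : ℝ) : ℍ[ℝ])
        + qe 3 * ((lu ρ 3 x : ℝ) : ℍ[ℝ])) := by
      unfold qdxbar
      rw [hcoe x hx 0, hcoe x hx 1, hcoe x hx 2, hcoe x hx 3]
    refine ⟨?_, ?_, ?_, ?_⟩ <;>
      · show - Quaternion.im (qdxbar (qlog ρ) x * qebar _) = _
        rw [hq]
        ext <;>
          simp [Quaternion.re_mul, Quaternion.imI_mul, Quaternion.imJ_mul,
            Quaternion.imK_mul] <;> ring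
  -- Step 3: second-derivative data of ρ at p.
  have hcdp : ContDiffAt ℝ (⊤ : ℕ∞) ρ p := hcd p hp
  have h1 : ContDiffAt ℝ 1 (fderiv ℝ ρ) p := hcdp.fderiv_right (WithTop.coe_le_coe.mpr le_top)
  have hfd : DifferentiableAt ℝ (fderiv ℝ ρ) p := h1.differentiableAt one_ne_zero
  have hdν : ∀ ν : Fin 4, DifferentiableAt ℝ (fun x => fderiv ℝ ρ x (qe ν)) p :=
    fun ν => hfd.clm_apply (differentiableAt_const _)
  have hsnd : ∀ ν : Fin 4, fderiv ℝ (fun x => fderiv ℝ ρ x (qe ν)) p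
      = (fderiv ℝ (fderiv ℝ ρ) p).flip (qe ν) := by
    intro ν; rw [fderiv_clm_apply hfd (differentiableAt_const _)]; simp
  have hsymm : ∀ μ ν : Fin 4, fderiv ℝ (fderiv ℝ ρ) p (qe μ) (qe ν)
      = fderiv ℝ (fderiv ℝ ρ) p (qe ν) (qe μ) :=
    fun μ ν => (hcdp.isSymmSndFDerivAt (by simp; exact WithTop.coe_le_coe.mpr le_top)) _ _
  have hlap : qlap ρ p = fderiv ℝ (fderiv ℝ ρ) p (qe 0) (qe 0)
      + fderiv ℝ (fderiv ℝ ρ) p (qe 1) (qe 1) + fderiv ℝ (fderiv ℝ ρ) p (qe 2) (qe 2)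
      + fderiv ℝ (fderiv ℝ ρ) p (qe 3) (qe 3) := by
    have h4 : ∀ ν : Fin 4, rpd ν (rpd ν ρ) p = fderiv ℝ (fderiv ℝ ρ) p (qe ν) (qe ν) := by
      intro ν
      show fderiv ℝ (fun x => fderiv ℝ ρ x (qe ν)) p (qe ν) = _
      rw [hsnd ν]; simp
    show ∑ μ : Fin 4, rpd μ (rpd μ ρ) p = _
    rw [Fin.sum_univ_four, h4 0, h4 1, h4 2, h4 3]
  -- Step 4: first and second derivative data of `lu` at p.
  have hvh : ∀ ν : Fin 4, HasFDerivAt (fun x => (ρ x)⁻¹ * fderiv ℝ ρ x (qe ν))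
      (((ρ p)⁻¹) • ((fderiv ℝ (fderiv ℝ ρ) p).flip (qe ν))
        + (fderiv ℝ ρ p (qe ν)) •
          ((-ContinuousLinearMap.mulLeftRight ℝ ℝ (ρ p)⁻¹ (ρ p)⁻¹).comp (fderiv ℝ ρ p))) p := by
    intro ν
    have hinv : HasFDerivAt (fun x => (ρ x)⁻¹)
        ((-ContinuousLinearMap.mulLeftRight ℝ ℝ (ρ p)⁻¹ (ρ p)⁻¹).comp (fderiv ℝ ρ p)) p :=
      (hasFDerivAt_inv' (hne p hp)).comp p (hρd p hp).hasFDerivAt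
    have h := hinv.mul ((hdν ν).hasFDerivAt)
    rwa [hsnd ν] at h
  have hev : ∀ ν : Fin 4, (lu ρ ν) =ᶠ[nhds p] (fun x => (ρ x)⁻¹ * fderiv ℝ ρ x (qe ν)) := by
    intro ν
    filter_upwards [hUev] with x hx
    show fderiv ℝ (fun y => Real.log (ρ y)) x (qe ν) = _
    rw [fderiv.log (hρd x hx) (hne x hx)]
    simp
  have hu_diff : ∀ ν : Fin 4, DifferentiableAt ℝ (lu ρ ν) p := fun ν =>
    (Filter.EventuallyEq.differentiableAt_iff (hev ν)).mpr (hvh ν).differentiableAt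
  have hu_val : ∀ ν : Fin 4, lu ρ ν p = (ρ p)⁻¹ * fderiv ℝ ρ p (qe ν) :=
    fun ν => (hev ν).eq_of_nhds
  have hS : ∀ μ ν : Fin 4, fderiv ℝ (lu ρ ν) p (qe μ)
      = (ρ p)⁻¹ * (2⁻¹ * (fderiv ℝ (fderiv ℝ ρ) p (qe μ) (qe ν)
          + fderiv ℝ (fderiv ℝ ρ) p (qe ν) (qe μ)))
        - (ρ p)⁻¹ * fderiv ℝ ρ p (qe μ) * ((ρ p)⁻¹ * fderiv ℝ ρ p (qe ν)) := by
    intro μ ν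
    rw [(hev ν).fderiv_eq, (hvh ν).fderiv]
    simp only [ContinuousLinearMap.add_apply, ContinuousLinearMap.smul_apply,
      ContinuousLinearMap.coe_comp', Function.comp_apply, ContinuousLinearMap.neg_apply,
      ContinuousLinearMap.mulLeftRight_apply, ContinuousLinearMap.flip_apply, smul_eq_mul]
    rw [hsymm μ ν]
    ring
  -- Step 5: derivatives of the connection components at p.
  have hc1 : ∀ ν : Fin 4, HasFDerivAt (fun x => 2⁻¹ * lu ρ ν x)
      ((2⁻¹:ℝ) • fderiv ℝ (lu ρ ν) p) p :=
    fun ν => (hu_diff ν).hasFDerivAt.const_mul (2⁻¹:ℝ)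
  have hc2 : ∀ ν : Fin 4, HasFDerivAt (fun x => -(2⁻¹ * lu ρ ν x))
      (-((2⁻¹:ℝ) • fderiv ℝ (lu ρ ν) p)) p := fun ν => (hc1 ν).neg
  have hqA0 : ∀ μ : Fin 4, qpd μ (Aplus ρ 0) p
      = (-(2⁻¹ * fderiv ℝ (lu ρ 1) p (qe μ))) • qe 1
        + (-(2⁻¹ * fderiv ℝ (lu ρ 2) p (qe μ))) • qe 2
        + (-(2⁻¹ * fderiv ℝ (lu ρ 3) p (qe μ))) • qe 3 := by
    intro μ
    have hee : Aplus ρ 0 =ᶠ[nhds p] (fun x => (-(2⁻¹ * lu ρ 1 x)) • qe 1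
        + (-(2⁻¹ * lu ρ 2 x)) • qe 2 + (-(2⁻¹ * lu ρ 3 x)) • qe 3) := by
      filter_upwards [hUev] with x hx; exact (hrep x hx).1
    have hh := (((hc2 1).smul_const (qe 1)).add ((hc2 2).smul_const (qe 2))).add
      ((hc2 3).smul_const (qe 3))
    show fderiv ℝ (Aplus ρ 0) p (qe μ) = _
    rw [hee.fderiv_eq]; erw [hh.fderiv]
    simp
  have hqA1 : ∀ μ : Fin 4, qpd μ (Aplus ρ 1) p
      = (2⁻¹ * fderiv ℝ (lu ρ 0) p (qe μ)) • qe 1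
        + (2⁻¹ * fderiv ℝ (lu ρ 3) p (qe μ)) • qe 2
        + (-(2⁻¹ * fderiv ℝ (lu ρ 2) p (qe μ))) • qe 3 := by
    intro μ
    have hee : Aplus ρ 1 =ᶠ[nhds p] (fun x => (2⁻¹ * lu ρ 0 x) • qe 1
        + (2⁻¹ * lu ρ 3 x) • qe 2 + (-(2⁻¹ * lu ρ 2 x)) • qe 3) := by
      filter_upwards [hUev] with x hx; exact (hrep x hx).2.1
    have hh := (((hc1 0).smul_const (qe 1)).add ((hc1 3).smul_const (qe 2))).add
      ((hc2 2).smul_const (qe 3))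
    show fderiv ℝ (Aplus ρ 1) p (qe μ) = _
    rw [hee.fderiv_eq]; erw [hh.fderiv]
    simp
  have hqA2 : ∀ μ : Fin 4, qpd μ (Aplus ρ 2) p
      = (-(2⁻¹ * fderiv ℝ (lu ρ 3) p (qe μ))) • qe 1
        + (2⁻¹ * fderiv ℝ (lu ρ 0) p (qe μ)) • qe 2
        + (2⁻¹ * fderiv ℝ (lu ρ 1) p (qe μ)) • qe 3 := by
    intro μ
    have hee : Aplus ρ 2 =ᶠ[nhds p] (fun x => (-(2⁻¹ * lu ρ 3 x)) • qe 1
        + (2⁻¹ * lu ρ 0 x) • qe 2 + (2⁻¹ * lu ρ 1 x) • qe 3) := by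
      filter_upwards [hUev] with x hx; exact (hrep x hx).2.2.1
    have hh := (((hc2 3).smul_const (qe 1)).add ((hc1 0).smul_const (qe 2))).add
      ((hc1 1).smul_const (qe 3))
    show fderiv ℝ (Aplus ρ 2) p (qe μ) = _
    rw [hee.fderiv_eq]; erw [hh.fderiv]
    simp
  have hqA3 : ∀ μ : Fin 4, qpd μ (Aplus ρ 3) p
      = (2⁻¹ * fderiv ℝ (lu ρ 2) p (qe μ)) • qe 1
        + (-(2⁻¹ * fderiv ℝ (lu ρ 1) p (qe μ))) • qe 2
        + (2⁻¹ * fderiv ℝ (lu ρ 0) p (qe μ)) • qe 3 := by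
    intro μ
    have hee : Aplus ρ 3 =ᶠ[nhds p] (fun x => (2⁻¹ * lu ρ 2 x) • qe 1
        + (-(2⁻¹ * lu ρ 1 x)) • qe 2 + (2⁻¹ * lu ρ 0 x) • qe 3) := by
      filter_upwards [hUev] with x hx; exact (hrep x hx).2.2.2
    have hh := (((hc1 2).smul_const (qe 1)).add ((hc2 1).smul_const (qe 2))).add
      ((hc1 0).smul_const (qe 3))
    show fderiv ℝ (Aplus ρ 3) p (qe μ) = _
    rw [hee.fderiv_eq]; erw [hh.fderiv]
    simp
  -- Step 6: the final computation.
  obtain ⟨hv0, hv1, hv2, hv3⟩ := hrep p hp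
  refine ⟨?_, ?_, ?_⟩ <;>
    · unfold curv
      rw [hlap]
      simp only [hqA0, hqA1, hqA2, hqA3, hv0, hv1, hv2, hv3, hS, hu_val]
      ext <;>
        simp [Quaternion.re_mul, Quaternion.imI_mul, Quaternion.imJ_mul,
          Quaternion.imK_mul] <;> ring

/-- The harmonic-function-ansatz connection A⁺ built from a smooth positive super-potential ρ
on an open set U ⊆ ℍ is anti-self-dual at a point p ∈ U iff (Δρ)(p) = 0; in particular it is
anti-self-dual on all of U iff ρ is harmonic on U. -/
theorem antiSelfDual_iff_harmonic (U : Set ℍ[ℝ]) (hU : IsOpen U) (ρ : ℍ[ℝ] → ℝ)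
    (hρ : ContDiffOn ℝ (⊤ : ℕ∞) ρ U) (hpos : ∀ x ∈ U, 0 < ρ x) :
    (∀ p ∈ U, AntiSelfDualAt (Aplus ρ) p ↔ qlap ρ p = 0) ∧
    ((∀ p ∈ U, AntiSelfDualAt (Aplus ρ) p) ↔ ∀ p ∈ U, qlap ρ p = 0) := by
  have H : ∀ p ∈ U, (AntiSelfDualAt (Aplus ρ) p ↔ qlap ρ p = 0) := by
    intro p hp
    obtain ⟨k1, k2, k3⟩ := key_curv U hU ρ hρ hpos hp
    have h2r : ((2:ℝ)⁻¹ * (ρ p)⁻¹ : ℝ) ≠ 0 := by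
      have h := (hpos p hp).ne'
      positivity
    constructor
    · rintro ⟨h1, _, _⟩
      have hz : ((2:ℝ)⁻¹ * (ρ p)⁻¹ * qlap ρ p) • qe 1 = 0 := by
        rw [← k1, h1, neg_add_cancel]
      have hz' : (2:ℝ)⁻¹ * (ρ p)⁻¹ * qlap ρ p = 0 := by
        have h := congrArg QuaternionAlgebra.imI hz
        simpa using h
      rcases mul_eq_zero.1 hz' with h | h
      · exact absurd h h2r
      · exact h
    · intro h0
      have hz : ((2:ℝ)⁻¹ * (ρ p)⁻¹ * qlap ρ p : ℝ) = 0 := by rw [h0, mul_zero]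
      rw [hz, zero_smul] at k1 k2 k3
      exact ⟨eq_neg_of_add_eq_zero_left k1, eq_neg_of_add_eq_zero_left k2,
        eq_neg_of_add_eq_zero_left k3⟩
  exact ⟨H, forall₂_congr H⟩
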